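/- arXiv:2511.11785 — 4 statements merged into one kernel-verified Lean document; each statement's English description precedes it below -/
import Mathlib

section
/- Let P be a poset on a nonempty finite set N and S = L(P). Then every pair (u,v) ∈ N×N with u ≠ v satisfies exactly one of the following three conditions: (a) {u,v} ∈ Inv(S); (b) (u,v) ∈ tr(Cov(S)); (c) (v,u) ∈ tr(Cov(S)). -/
/-- An *enumeration* of a finite set `N`: a bijection `π` from `{1,…,n}` (modeled as
`Fin (Fintype.card N)`) onto `N`. -/
abbrev Enum (N : Type*) [Fintype N] := Fin (Fintype.card N) ≃ N

/-- `P ⊆ N × N` is a *poset on `N`*: a reflexive, antisymmetric and transitive relation. -/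
def IsPosetOn {N : Type*} (P : Set (N × N)) : Prop :=
  (∀ u : N, (u, u) ∈ P) ∧
  (∀ u v : N, (u, v) ∈ P → (v, u) ∈ P → u = v) ∧
  (∀ u v w : N, (u, v) ∈ P → (v, w) ∈ P → (u, w) ∈ P)

/-- The diagonal `Δ = {(u,u) : u ∈ N}`. -/
def diag (N : Type*) : Set (N × N) := {p | p.1 = p.2}

/-- The set `L(T)` of *linear extensions* of a relation `T ⊆ N × N`:
enumerations `π` with `π⁻¹(u) ≤ π⁻¹(v)` for all `(u,v) ∈ T`. -/
def LinExt {N : Type*} [Fintype N] (T : Set (N × N)) : Set (Enum N) :=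
  {π | ∀ p ∈ T, π.symm p.1 ≤ π.symm p.2}

/-- `π` and `σ` differ by the adjacent transposition at positions `i, i+1`. -/
def AdjTranspAt {N : Type*} [Fintype N] (π σ : Enum N) (i : Fin (Fintype.card N))
    (h : (i : ℕ) + 1 < Fintype.card N) : Prop :=
  π i = σ ⟨(i : ℕ) + 1, h⟩ ∧ π ⟨(i : ℕ) + 1, h⟩ = σ i ∧
  ∀ k : Fin (Fintype.card N), k ≠ i → k ≠ ⟨(i : ℕ) + 1, h⟩ → π k = σ k

/-- `π` and `σ` differ by an adjacent transposition. -/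
def AdjTransp {N : Type*} [Fintype N] (π σ : Enum N) : Prop :=
  ∃ i h, AdjTranspAt π σ i h

/-- The *permutohedral graph* over `N`: nodes are the enumerations of `N`, and edges join
enumerations differing by an adjacent transposition. -/
def permGraph (N : Type*) [Fintype N] : SimpleGraph (Enum N) where
  Adj π σ := AdjTransp π σ
  symm := by
    constructor
    rintro π σ ⟨i, h, h1, h2, h3⟩
    exact ⟨i, h, h2.symm, h1.symm, fun k hk hk' => (h3 k hk hk').symm⟩
  loopless := by
    constructor
    rintro π ⟨i, h, h1, -, -⟩
    have hi : i = ⟨(i : ℕ) + 1, h⟩ := π.injective h1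
    have : (i : ℕ) = (i : ℕ) + 1 := congrArg Fin.val hi
    omega

/-- `π` and `σ` are joined by an edge of the permutohedral graph labeled by `{u,v}`,
i.e. they differ by the adjacent transposition at some `i` with `{π(i), π(i+1)} = {u,v}`. -/
def AdjLabeled {N : Type*} [Fintype N] (π σ : Enum N) (u v : N) : Prop :=
  ∃ i h, AdjTranspAt π σ i h ∧ ({π i, π ⟨(i : ℕ) + 1, h⟩} : Set N) = {u, v}

/-- `Inv[π,σ]`: the set of *inversions* between enumerations `π` and `σ`, i.e. two-element
sets `{u,v} ⊆ N` whose elements occur in opposite mutual order in `π` and `σ`. -/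
def InvBetween {N : Type*} [Fintype N] (π σ : Enum N) : Set (Set N) :=
  {L | ∃ u v : N, L = {u, v} ∧ π.symm u < π.symm v ∧ σ.symm v < σ.symm u}

/-- `Inv(S)`: the set of *inversions within* a set `S` of enumerations: two-element sets
`{u,v} ⊆ N` labeling some edge of the permutohedral graph with both endpoints in `S`. -/
def InvS {N : Type*} [Fintype N] (S : Set (Enum N)) : Set (Set N) :=
  {L | ∃ u v : N, u ≠ v ∧ L = {u, v} ∧ ∃ π ∈ S, ∃ σ ∈ S, AdjLabeled π σ u v}

/-- `Cov(S)`: the *covering relation* for a set `S` of enumerations: pairs `(u,v)` such that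
some edge labeled `{u,v}` joins `π ∈ S` with `σ ∉ S` and `u` strictly precedes `v` in `π`. -/
def CovS {N : Type*} [Fintype N] (S : Set (Enum N)) : Set (N × N) :=
  {p | ∃ π ∈ S, ∃ σ, σ ∉ S ∧ AdjLabeled π σ p.1 p.2 ∧ π.symm p.1 < π.symm p.2}

/-- The transitive closure `tr(R)` of a relation `R ⊆ N × N`. -/
def trCl {N : Type*} (R : Set (N × N)) : Set (N × N) :=
  {p | Relation.TransGen (fun a b => (a, b) ∈ R) p.1 p.2}

/-- `R` is acyclic: no cycle `u_1, …, u_k = u_1` (`k ≥ 2`) with consecutive pairs in `R`;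
equivalently, no `u` with `(u,u)` in the transitive closure of `R`. -/
def Acyclic {N : Type*} (R : Set (N × N)) : Prop :=
  ∀ u : N, ¬ Relation.TransGen (fun a b => (a, b) ∈ R) u u

/-- A set `S` of nodes of the permutohedral graph is *geodetically convex* if for all
`π, σ ∈ S`, every node `τ` lying on a geodesic between `π` and `σ` belongs to `S`. -/
def GeodConvex {N : Type*} [Fintype N] (S : Set (Enum N)) : Prop :=
  ∀ π ∈ S, ∀ σ ∈ S, ∀ τ : Enum N,
    (permGraph N).dist π τ + (permGraph N).dist τ σ = (permGraph N).dist π σ → τ ∈ S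

/-- The *label* on an edge of the permutohedral graph: the (two-element) set of elements of `N`
whose positions differ in the two endpoint enumerations; for an edge given by the adjacent
transposition at `i` this is exactly `{π(i), π(i+1)}`. -/
def edgeLabel {N : Type*} [Fintype N] : Sym2 (Enum N) → Set N :=
  Sym2.lift ⟨fun π σ => {u | π.symm u ≠ σ.symm u}, fun π σ => by
    ext u; simp [ne_comm]⟩

/-- The total order `T_π` on `N` associated with an enumeration `π`. -/
def Tord {N : Type*} [Fintype N] (π : Enum N) : Set (N × N) :=
  {p | π.symm p.1 ≤ π.symm p.2}

section Aux
variable {N : Type*} [Fintype N]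
variable {N : Type*} [Fintype N]

lemma exists_linext_of_emb (Q : Set (N × N)) {K : Type*} [LinearOrder K]
    (k : N → K) (hinj : Function.Injective k) (hmono : ∀ p ∈ Q, k p.1 ≤ k p.2) :
    ∃ π : Enum N, π ∈ LinExt Q ∧ ∀ x y : N, π.symm x ≤ π.symm y ↔ k x ≤ k y := by
  letI : LinearOrder N := LinearOrder.lift' k hinj
  let e := monoEquivOfFin N rfl
  have key : ∀ x y : N, e.toEquiv.symm x ≤ e.toEquiv.symm y ↔ k x ≤ k y := by
    intro x y
    exact (e.symm.le_iff_le : e.symm x ≤ e.symm y ↔ x ≤ y)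
  exact ⟨e.toEquiv, fun p hp => (key p.1 p.2).2 (hmono p hp), key⟩

lemma linext_nonempty (Q : Set (N × N)) (hQ : IsPosetOn Q) : (LinExt Q).Nonempty := by
  classical
  obtain ⟨hrefl, hanti, htrans⟩ := hQ
  set e := Fintype.equivFin N with he
  set r : N → ℕ := fun x => (Finset.univ.filter fun y => (y, x) ∈ Q).card with hr
  set k : N → ℕ ×ₗ Fin (Fintype.card N) := fun x => toLex (r x, e x) with hk
  have hinj : Function.Injective k := by
    intro x y h
    exact e.injective (congrArg Prod.snd (congrArg ofLex h))
  have hmono : ∀ p ∈ Q, k p.1 ≤ k p.2 := by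
    rintro ⟨x, y⟩ hxy
    by_cases hxy' : x = y
    · subst hxy'; exact le_refl _
    · have hlt : r x < r y := by
        apply Finset.card_lt_card
        constructor
        · intro z hz
          simp only [Finset.mem_filter, Finset.mem_univ, true_and] at hz ⊢
          exact htrans z x y hz hxy
        · intro hsub
          have : y ∈ (Finset.univ.filter fun z => (z, y) ∈ Q) := by
            simp [hrefl y]
          have := hsub this
          simp only [Finset.mem_filter, Finset.mem_univ, true_and] at this
          exact hxy' (hanti x y hxy this)
      exact le_of_lt (Prod.Lex.lt_iff.2 (Or.inl hlt))
  obtain ⟨π, hπ, -⟩ := exists_linext_of_emb Q k hinj hmono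
  exact ⟨π, hπ⟩

lemma exists_adjacent_cover (Q : Set (N × N)) (hQ : IsPosetOn Q) {a b : N}
    (hab : (a, b) ∈ Q) (hne : a ≠ b)
    (hcov : ∀ w, (a, w) ∈ Q → (w, b) ∈ Q → w = a ∨ w = b) :
    ∃ π ∈ LinExt Q, ∃ (i : Fin (Fintype.card N)) (h : (i : ℕ) + 1 < Fintype.card N),
      π i = a ∧ π ⟨(i : ℕ) + 1, h⟩ = b := by
  classical
  obtain ⟨hrefl, hanti, htrans⟩ := hQ
  obtain ⟨ℓ, hℓ⟩ := linext_nonempty Q ⟨hrefl, hanti, htrans⟩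
  set f : N → ℕ := fun x => if x = a then 1 else if x = b then 2 else
    if (x, b) ∈ Q then 0 else 3 with hf
  have hfa : f a = 1 := by simp [hf]
  have hfb : f b = 2 := by simp [hf, Ne.symm hne]
  have hf1 : ∀ z, f z = 1 → z = a := by
    intro z h
    by_contra hza
    simp only [hf, if_neg hza] at h
    split_ifs at h <;> omega
  have hf2 : ∀ z, f z = 2 → z = b := by
    intro z h
    by_contra hzb
    simp only [hf] at h
    split_ifs at h <;> omega
  have hfle : ∀ x y, (x, y) ∈ Q → f x ≤ f y := by
    intro x y hxy
    by_cases hxyeq : x = y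
    · rw [hxyeq]
    by_cases hxa : x = a
    · have hya : y ≠ a := fun h => hxyeq (hxa.trans h.symm)
      by_cases hyb : y = b
      · simp [hf, hxa, hya, hyb, Ne.symm hne]
      · have hyd : (y, b) ∉ Q := by
          intro hyQ
          rcases hcov y (hxa ▸ hxy) hyQ with h | h
          · exact hya h
          · exact hyb h
        simp [hf, hxa, hya, hyb, hyd]
    by_cases hxb : x = b
    · have hxyQ : (b, y) ∈ Q := hxb ▸ hxy
      have hya : y ≠ a := by
        intro h
        exact hne (hanti a b hab (h ▸ hxyQ))
      have hyb : y ≠ b := fun h => hxyeq (hxb.trans h.symm)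
      have hyd : (y, b) ∉ Q := fun hyQ => hyb (hanti y b hyQ hxyQ)
      simp [hf, hxb, hya, hyb, hyd, Ne.symm hne]
    by_cases hxd : (x, b) ∈ Q
    · simp [hf, hxa, hxb, hxd]
    · have hya : y ≠ a := by
        intro h
        exact hxd (htrans x y b hxy (h ▸ hab))
      have hyb : y ≠ b := fun h => hxd (h ▸ hxy)
      have hyd : (y, b) ∉ Q := fun hyQ => hxd (htrans x y b hxy hyQ)
      simp [hf, hxa, hxb, hxd, hya, hyb, hyd]
  set k : N → ℕ ×ₗ Fin (Fintype.card N) := fun x => toLex (f x, ℓ.symm x) with hk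
  have hinj : Function.Injective k := by
    intro x y h
    exact ℓ.symm.injective (congrArg Prod.snd (congrArg ofLex h))
  have hmono : ∀ p ∈ Q, k p.1 ≤ k p.2 := by
    rintro ⟨x, y⟩ hxy
    rcases lt_or_eq_of_le (hfle x y hxy) with h | h
    · exact le_of_lt (Prod.Lex.lt_iff.2 (Or.inl h))
    · exact Prod.Lex.le_iff.2 (Or.inr ⟨h, hℓ (x, y) hxy⟩)
  obtain ⟨π, hπ, hiff⟩ := exists_linext_of_emb Q k hinj hmono
  set i := π.symm a with hi
  set j := π.symm b with hj
  have hijle : i ≤ j := (hiff a b).2 (hmono (a, b) hab)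
  have hijne : i ≠ j := fun h => hne (π.symm.injective h)
  have hijlt : (i : ℕ) < (j : ℕ) := Fin.lt_def.1 (lt_of_le_of_ne hijle hijne)
  have hjval : (j : ℕ) = (i : ℕ) + 1 := by
    by_contra hcon
    have hp : (i : ℕ) + 1 < Fintype.card N := lt_of_le_of_lt (by omega) j.isLt
    set p : Fin (Fintype.card N) := ⟨(i : ℕ) + 1, hp⟩ with hpdef
    set x := π p with hx
    have hpx : π.symm x = p := π.symm_apply_apply p
    have h1 : k a < k x := by
      have hn : ¬ π.symm x ≤ π.symm a := by
        rw [hpx, ← hi, Fin.le_def]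
        simp [hpdef]
      exact lt_of_not_ge (fun h => hn ((hiff x a).2 h))
    have h2 : k x < k b := by
      have hn : ¬ π.symm b ≤ π.symm x := by
        rw [hpx, ← hj, Fin.le_def]
        simp only [hpdef]
        omega
      exact lt_of_not_ge (fun h => hn ((hiff b x).2 h))
    rw [hk] at h1 h2
    rw [Prod.Lex.lt_iff] at h1 h2
    simp only [hfa, hfb, ofLex_toLex] at h1 h2
    have hxa : x ≠ a := by
      intro h
      have : p = i := by rw [← hpx, h, ← hi]
      have := congrArg Fin.val this
      simp only [hpdef] at this
      omega
    have hxb : x ≠ b := by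
      intro h
      have : p = j := by rw [← hpx, h, ← hj]
      have := congrArg Fin.val this
      simp only [hpdef] at this
      omega
    have hfx1 : f x ≠ 1 := fun h => hxa (hf1 x h)
    have hfx2 : f x ≠ 2 := fun h => hxb (hf2 x h)
    rcases h1 with h1 | ⟨h1, -⟩
    · rcases h2 with h2 | ⟨h2, -⟩
      · omega
      · exact hfx2 h2
    · exact hfx1 h1.symm
  have hfin : (⟨(i : ℕ) + 1, hjval ▸ j.isLt⟩ : Fin (Fintype.card N)) = j :=
    Fin.ext (by simp [hjval])
  refine ⟨π, hπ, i, hjval ▸ j.isLt, π.apply_symm_apply a, ?_⟩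
  rw [hfin, hj, π.apply_symm_apply]

variable {N : Type*} [Fintype N]

lemma swap_viol {n : ℕ} {i j x y : Fin n} (hji : (j : ℕ) = (i : ℕ) + 1)
    (hxy : x ≤ y) (hv : Equiv.swap i j y < Equiv.swap i j x) : x = i ∧ y = j := by
  have hij : i ≠ j := fun h => by rw [h] at hji; omega
  rw [Fin.le_def] at hxy
  rw [Fin.lt_def] at hv
  by_cases hxi : x = i
  · subst hxi
    rw [Equiv.swap_apply_left] at hv
    by_cases hyi : y = x
    · subst hyi; rw [Equiv.swap_apply_left] at hv; omega
    · by_cases hyj : y = j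
      · exact ⟨rfl, hyj⟩
      · rw [Equiv.swap_apply_of_ne_of_ne hyi hyj] at hv
        have : (y : ℕ) ≠ (x : ℕ) := fun h => hyi (Fin.ext h)
        omega
  · by_cases hxj : x = j
    · subst hxj
      rw [Equiv.swap_apply_right] at hv
      by_cases hyi : y = i
      · subst hyi; omega
      · by_cases hyj : y = x
        · subst hyj; rw [Equiv.swap_apply_right] at hv; omega
        · rw [Equiv.swap_apply_of_ne_of_ne hyi hyj] at hv; omega
    · rw [Equiv.swap_apply_of_ne_of_ne hxi hxj] at hv
      by_cases hyi : y = i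
      · subst hyi
        rw [Equiv.swap_apply_left] at hv
        have : (x : ℕ) ≠ (y : ℕ) := fun h => hxi (Fin.ext h)
        omega
      · by_cases hyj : y = j
        · subst hyj
          rw [Equiv.swap_apply_right] at hv
          have : (x : ℕ) ≠ (y : ℕ) := fun h => hxj (Fin.ext h)
          omega
        · rw [Equiv.swap_apply_of_ne_of_ne hyi hyj] at hv; omega

lemma pair_cases {N' : Type*} {a b c d : N'} (hab : a ≠ b) (h : ({a, b} : Set N') = {c, d}) :
    (a = c ∧ b = d) ∨ (a = d ∧ b = c) := by
  have ha : a ∈ ({c, d} : Set N') := h ▸ (by simp : a ∈ ({a, b} : Set N'))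
  have hb : b ∈ ({c, d} : Set N') := h ▸ (by simp : b ∈ ({a, b} : Set N'))
  have hc : c ∈ ({a, b} : Set N') := h ▸ (by simp : c ∈ ({c, d} : Set N'))
  simp only [Set.mem_insert_iff, Set.mem_singleton_iff] at ha hb hc
  rcases ha with rfl | rfl
  · rcases hb with rfl | rfl
    · exact absurd rfl hab
    · exact Or.inl ⟨rfl, rfl⟩
  · rcases hb with rfl | rfl
    · exact Or.inr ⟨rfl, rfl⟩
    · rcases hc with rfl | rfl
      · exact Or.inr ⟨rfl, rfl⟩
      · exact absurd rfl hab

/-- From `AdjTranspAt π σ i h`, the symm of `σ` is `swap i j ∘ π.symm`. -/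
lemma adjTranspAt_symm {π σ : Enum N} {i : Fin (Fintype.card N)}
    {h : (i : ℕ) + 1 < Fintype.card N} (hat : AdjTranspAt π σ i h) :
    ∀ w : N, σ.symm w = Equiv.swap i ⟨(i : ℕ) + 1, h⟩ (π.symm w) := by
  obtain ⟨h1, h2, h3⟩ := hat
  set j : Fin (Fintype.card N) := ⟨(i : ℕ) + 1, h⟩ with hjdef
  have hσ : σ = (Equiv.swap i j).trans π := by
    apply Equiv.ext
    intro x
    simp only [Equiv.trans_apply]
    by_cases hxi : x = i
    · rw [hxi, Equiv.swap_apply_left, ← h2]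
    · by_cases hxj : x = j
      · rw [hxj, Equiv.swap_apply_right, ← h1]
      · rw [Equiv.swap_apply_of_ne_of_ne hxi hxj, h3 x hxi hxj]
  intro w
  rw [hσ]
  simp [Equiv.symm_trans_apply, Equiv.symm_swap]

/-- Cov(L(Q)) is contained in the strict part of Q. -/
lemma covS_subset (Q : Set (N × N)) (hQ : IsPosetOn Q) :
    ∀ p ∈ CovS (LinExt Q), p ∈ Q ∧ p.1 ≠ p.2 := by
  rintro ⟨a, b⟩ ⟨π, hπ, σ, hσ, ⟨i, h, hat, hlab⟩, hlt⟩
  set j : Fin (Fintype.card N) := ⟨(i : ℕ) + 1, h⟩ with hjdef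
  have hne : a ≠ b := by
    intro hab
    rw [hab] at hlt
    exact lt_irrefl _ hlt
  have hπij : π i ≠ π j := by
    intro hp
    have := π.injective hp
    have := congrArg Fin.val this
    simp [hjdef] at this
  -- identify a = π i, b = π j
  have hcases := pair_cases hπij hlab
  have hia : π i = a ∧ π j = b := by
    rcases hcases with hc | ⟨hc1, hc2⟩
    · exact hc
    · exfalso
      have hc1' : π i = b := hc1
      have hc2' : π j = a := hc2
      have hlt' : π.symm a < π.symm b := hlt
      have h1 : π.symm a = j := by rw [← hc2']; exact π.symm_apply_apply j
      have h2 : π.symm b = i := by rw [← hc1']; exact π.symm_apply_apply i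
      rw [h1, h2, Fin.lt_def] at hlt'
      simp only [hjdef] at hlt'
      omega
  obtain ⟨hia1, hia2⟩ := hia
  -- σ violates some pair of Q
  have : ∃ p ∈ Q, ¬ σ.symm p.1 ≤ σ.symm p.2 := by
    by_contra hcon
    push_neg at hcon
    exact hσ hcon
  obtain ⟨⟨p, q⟩, hpq, hviol⟩ := this
  have hπpq : π.symm p ≤ π.symm q := hπ (p, q) hpq
  have hv : Equiv.swap i j (π.symm q) < Equiv.swap i j (π.symm p) := by
    rw [← adjTranspAt_symm hat, ← adjTranspAt_symm hat]
    exact lt_of_not_ge hviol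
  obtain ⟨e1, e2⟩ := swap_viol (by simp [hjdef]) hπpq hv
  have hpa : p = a := by rw [← hia1, ← e1, π.apply_symm_apply]
  have hqb : q = b := by rw [← hia2, ← e2, π.apply_symm_apply]
  exact ⟨by rw [← hpa, ← hqb]; exact hpq, hne⟩

/-- If `b` covers `a` in `Q`, then `(a,b) ∈ Cov(L(Q))`. -/
lemma cov_of_cover (Q : Set (N × N)) (hQ : IsPosetOn Q)
    (hEx : ∃ π ∈ LinExt Q, ∃ (i : Fin (Fintype.card N)) (h : (i : ℕ) + 1 < Fintype.card N),
      π i = aa ∧ π ⟨(i : ℕ) + 1, h⟩ = bb)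
    (hab : (aa, bb) ∈ Q) (hne : aa ≠ bb) :
    (aa, bb) ∈ CovS (LinExt Q) := by
  obtain ⟨π, hπ, i, h, hia, hib⟩ := hEx
  set j : Fin (Fintype.card N) := ⟨(i : ℕ) + 1, h⟩ with hjdef
  set σ : Enum N := (Equiv.swap i j).trans π with hσdef
  have hσs : ∀ w : N, σ.symm w = Equiv.swap i j (π.symm w) := by
    intro w
    rw [hσdef]
    simp [Equiv.symm_trans_apply, Equiv.symm_swap]
  have hijne : i ≠ j := by
    intro hcon
    have := congrArg Fin.val hcon
    simp [hjdef] at this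
  have hat : AdjTranspAt π σ i h := by
    refine ⟨?_, ?_, ?_⟩
    · rw [hσdef]; simp [Equiv.trans_apply, Equiv.swap_apply_right, hjdef]
    · rw [hσdef]; simp [Equiv.trans_apply, Equiv.swap_apply_left, hjdef]
    · intro k hki hkj
      rw [hσdef]
      simp [Equiv.trans_apply, Equiv.swap_apply_of_ne_of_ne hki hkj, hjdef]
  have hsyma : π.symm aa = i := by rw [← hia, π.symm_apply_apply]
  have hsymb : π.symm bb = j := by rw [← hib, π.symm_apply_apply]
  have hσnot : σ ∉ LinExt Q := by
    intro hσmem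
    have := hσmem (aa, bb) hab
    rw [hσs, hσs, hsyma, hsymb, Equiv.swap_apply_left, Equiv.swap_apply_right,
      Fin.le_def] at this
    simp [hjdef] at this
  refine ⟨π, hπ, σ, hσnot, ⟨i, h, hat, by rw [hia, hib]⟩, ?_⟩
  rw [hsyma, hsymb, Fin.lt_def]
  simp [hjdef]

variable {N : Type*} [Fintype N]

lemma trCl_covS_eq (Q : Set (N × N)) (hQ : IsPosetOn Q) :
    trCl (CovS (LinExt Q)) = {p | p ∈ Q ∧ p.1 ≠ p.2} := by
  classical
  obtain ⟨hrefl, hanti, htrans⟩ := hQ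
  apply Set.eq_of_subset_of_subset
  · rintro ⟨a, b⟩ hp
    have key : ∀ x y : N, Relation.TransGen (fun s t => (s, t) ∈ CovS (LinExt Q)) x y →
        (x, y) ∈ Q ∧ x ≠ y := by
      intro x y h
      induction h with
      | single hxc => exact covS_subset Q ⟨hrefl, hanti, htrans⟩ _ hxc
      | tail _ hbc ih =>
        have h2 := covS_subset Q ⟨hrefl, hanti, htrans⟩ _ hbc
        refine ⟨htrans _ _ _ ih.1 h2.1, ?_⟩
        intro hac
        exact ih.2 (hanti _ _ ih.1 (hac ▸ h2.1))
    exact key a b hp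
  · rintro ⟨a, b⟩ ⟨habQ, hne⟩
    -- strong induction on the number of elements strictly between a and b
    let btw : N → N → Finset N := fun x y =>
      Finset.univ.filter (fun w => (x, w) ∈ Q ∧ (w, y) ∈ Q ∧ w ≠ x ∧ w ≠ y)
    have main : ∀ m : ℕ, ∀ x y : N, (btw x y).card ≤ m → (x, y) ∈ Q → x ≠ y →
        Relation.TransGen (fun s t => (s, t) ∈ CovS (LinExt Q)) x y := by
      intro m
      induction m with
      | zero =>
        intro x y hcard hxy hne'
        have hem : btw x y = ∅ := Finset.card_eq_zero.1 (Nat.le_zero.1 hcard)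
        have hcov : ∀ w, (x, w) ∈ Q → (w, y) ∈ Q → w = x ∨ w = y := by
          intro w h1 h2
          by_contra hcon
          push_neg at hcon
          have : w ∈ btw x y := by
            simp only [btw, Finset.mem_filter, Finset.mem_univ, true_and]
            exact ⟨h1, h2, hcon.1, hcon.2⟩
          rw [hem] at this
          exact absurd this (Finset.notMem_empty w)
        exact Relation.TransGen.single
          (cov_of_cover Q ⟨hrefl, hanti, htrans⟩ (exists_adjacent_cover Q ⟨hrefl, hanti, htrans⟩ hxy hne' hcov)
            hxy hne')
      | succ m ih =>
        intro x y hcard hxy hne'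
        by_cases hem : btw x y = ∅
        · have hcov : ∀ w, (x, w) ∈ Q → (w, y) ∈ Q → w = x ∨ w = y := by
            intro w h1 h2
            by_contra hcon
            push_neg at hcon
            have : w ∈ btw x y := by
              simp only [btw, Finset.mem_filter, Finset.mem_univ, true_and]
              exact ⟨h1, h2, hcon.1, hcon.2⟩
            rw [hem] at this
            exact absurd this (Finset.notMem_empty w)
          exact Relation.TransGen.single
            (cov_of_cover Q ⟨hrefl, hanti, htrans⟩ (exists_adjacent_cover Q ⟨hrefl, hanti, htrans⟩ hxy hne' hcov)
              hxy hne')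
        · obtain ⟨w, hw⟩ := Finset.nonempty_iff_ne_empty.2 hem
          simp only [btw, Finset.mem_filter, Finset.mem_univ, true_and] at hw
          obtain ⟨hxw, hwy, hwx, hwyne⟩ := hw
          have hsub1 : btw x w ⊆ (btw x y).erase w := by
            intro z hz
            simp only [btw, Finset.mem_filter, Finset.mem_univ, true_and] at hz
            obtain ⟨h1, h2, h3, h4⟩ := hz
            rw [Finset.mem_erase]
            refine ⟨h4, ?_⟩
            simp only [btw, Finset.mem_filter, Finset.mem_univ, true_and]
            refine ⟨h1, htrans _ _ _ h2 hwy, h3, ?_⟩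
            intro hzy
            exact hwyne (hanti _ _ hwy (hzy ▸ h2))
          have hsub2 : btw w y ⊆ (btw x y).erase w := by
            intro z hz
            simp only [btw, Finset.mem_filter, Finset.mem_univ, true_and] at hz
            obtain ⟨h1, h2, h3, h4⟩ := hz
            rw [Finset.mem_erase]
            refine ⟨h3, ?_⟩
            simp only [btw, Finset.mem_filter, Finset.mem_univ, true_and]
            refine ⟨htrans _ _ _ hxw h1, h2, ?_, h4⟩
            intro hzx
            exact hwx (hanti _ _ (hzx ▸ h1) hxw)
          have hwmem : w ∈ btw x y := by
            simp only [btw, Finset.mem_filter, Finset.mem_univ, true_and]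
            exact ⟨hxw, hwy, hwx, hwyne⟩
          have hcard' : ((btw x y).erase w).card ≤ m := by
            have := Finset.card_erase_of_mem hwmem
            omega
          exact Relation.TransGen.trans
            (ih x w (le_trans (Finset.card_le_card hsub1) hcard') hxw (Ne.symm hwx))
            (ih w y (le_trans (Finset.card_le_card hsub2) hcard') hwy hwyne)
    exact main (btw a b).card a b le_rfl habQ hne

lemma inv_of_incomp (P : Set (N × N)) (hP : IsPosetOn P) {u v : N} (huv : u ≠ v)
    (h1 : (u, v) ∉ P) (h2 : (v, u) ∉ P) : ({u, v} : Set N) ∈ InvS (LinExt P) := by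
  obtain ⟨hrefl, hanti, htrans⟩ := hP
  set P' : Set (N × N) := {q | q ∈ P ∨ ((q.1, u) ∈ P ∧ (v, q.2) ∈ P)} with hP'def
  have hPsub : P ⊆ P' := fun q hq => Or.inl hq
  have hP' : IsPosetOn P' := by
    refine ⟨fun x => Or.inl (hrefl x), ?_, ?_⟩
    · rintro x y (hxy | ⟨hxu, hvy⟩) (hyx | ⟨hyu, hvx⟩)
      · exact hanti x y hxy hyx
      · exact absurd (htrans v y u (htrans v x y hvx hxy) hyu) h2
      · exact absurd (htrans v x u (htrans v y x hvy hyx) hxu) h2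
      · exact absurd (htrans v y u hvy hyu) h2
    · rintro x y z (hxy | ⟨hxu, hvy⟩) (hyz | ⟨hyu, hvz⟩)
      · exact Or.inl (htrans x y z hxy hyz)
      · exact Or.inr ⟨htrans x y u hxy hyu, hvz⟩
      · exact Or.inr ⟨hxu, htrans v y z hvy hyz⟩
      · exact Or.inr ⟨hxu, hvz⟩
  have huv' : (u, v) ∈ P' := Or.inr ⟨hrefl u, hrefl v⟩
  have hcov : ∀ w, (u, w) ∈ P' → (w, v) ∈ P' → w = u ∨ w = v := by
    rintro w (huw | ⟨huu, hvw⟩) (hwv | ⟨hwu, hvv⟩)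
    · exact absurd (htrans u w v huw hwv) h1
    · exact Or.inl (hanti w u hwu huw)
    · exact Or.inr (hanti w v hwv hvw)
    · exact absurd (htrans v w u hvw hwu) h2
  obtain ⟨π, hπ', i, h, hia, hib⟩ := exists_adjacent_cover P' hP' huv' huv hcov
  have hπ : π ∈ LinExt P := fun p hp => hπ' p (hPsub hp)
  set j : Fin (Fintype.card N) := ⟨(i : ℕ) + 1, h⟩ with hjdef
  set σ : Enum N := (Equiv.swap i j).trans π with hσdef
  have hσs : ∀ w : N, σ.symm w = Equiv.swap i j (π.symm w) := by
    intro w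
    rw [hσdef]
    simp [Equiv.symm_trans_apply, Equiv.symm_swap]
  have hat : AdjTranspAt π σ i h := by
    refine ⟨?_, ?_, ?_⟩
    · rw [hσdef]; simp [Equiv.trans_apply, Equiv.swap_apply_right, hjdef]
    · rw [hσdef]; simp [Equiv.trans_apply, Equiv.swap_apply_left, hjdef]
    · intro k hki hkj
      rw [hσdef]
      simp [Equiv.trans_apply, Equiv.swap_apply_of_ne_of_ne hki hkj, hjdef]
  have hσ : σ ∈ LinExt P := by
    rintro ⟨p, q⟩ hpq
    have hπpq : π.symm p ≤ π.symm q := hπ (p, q) hpq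
    by_contra hcon
    rw [hσs, hσs] at hcon
    have hv := lt_of_not_ge hcon
    obtain ⟨e1, e2⟩ := swap_viol (by simp [hjdef]) hπpq hv
    have hpu : p = u := by rw [← hia, ← e1, π.apply_symm_apply]
    have hqv : q = v := by rw [← hib, ← e2, π.apply_symm_apply]
    exact h1 (hpu ▸ hqv ▸ hpq)
  exact ⟨u, v, huv, rfl, π, hπ, σ, hσ, i, h, hat, by rw [hia, hib]⟩

lemma incomp_of_inv (P : Set (N × N)) {u v : N}
    (h : ({u, v} : Set N) ∈ InvS (LinExt P)) : (u, v) ∉ P ∧ (v, u) ∉ P := by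
  obtain ⟨u', v', hne', heq, π, hπ, σ, hσ, i, hh, hat, hlab⟩ := h
  set j : Fin (Fintype.card N) := ⟨(i : ℕ) + 1, hh⟩ with hjdef
  have hijval : (i : ℕ) < (j : ℕ) := by simp [hjdef]
  have hπij : π i ≠ π j := by
    intro hp
    have := congrArg Fin.val (π.injective hp)
    simp [hjdef] at this
  have hlab2 : ({π i, π j} : Set N) = {u, v} := by rw [hlab, heq]
  have hσi : σ.symm (π i) = j := by
    rw [adjTranspAt_symm hat, π.symm_apply_apply, Equiv.swap_apply_left]
  have hσj : σ.symm (π j) = i := by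
    rw [adjTranspAt_symm hat, π.symm_apply_apply, Equiv.swap_apply_right]
  have hπi : π.symm (π i) = i := π.symm_apply_apply i
  have hπj : π.symm (π j) = j := π.symm_apply_apply j
  constructor
  · intro hmem
    have hπle : π.symm u ≤ π.symm v := hπ (u, v) hmem
    have hσle : σ.symm u ≤ σ.symm v := hσ (u, v) hmem
    rcases pair_cases hπij hlab2 with ⟨e1, e2⟩ | ⟨e1, e2⟩
    · rw [← e1, ← e2, hσi, hσj, Fin.le_def] at hσle
      omega
    · rw [← e2, ← e1, hπj, hπi, Fin.le_def] at hπle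
      omega
  · intro hmem
    have hπle : π.symm v ≤ π.symm u := hπ (v, u) hmem
    have hσle : σ.symm v ≤ σ.symm u := hσ (v, u) hmem
    rcases pair_cases hπij hlab2 with ⟨e1, e2⟩ | ⟨e1, e2⟩
    · rw [← e2, ← e1, hπj, hπi, Fin.le_def] at hπle
      omega
    · rw [← e1, ← e2, hσi, hσj, Fin.le_def] at hσle
      omega


end Aux

/-- For a poset `P` on `N`, `S = L(P)`, and any pair `(u,v)` with `u ≠ v`,
exactly one of the following holds: (a) `{u,v} ∈ Inv(S)`; (b) `(u,v) ∈ tr(Cov(S))`;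
(c) `(v,u) ∈ tr(Cov(S))`. -/
theorem stmt12 {N : Type*} [Fintype N] [Nonempty N] (P : Set (N × N)) (hP : IsPosetOn P)
    (u v : N) (huv : u ≠ v) :
    (({u, v} : Set N) ∈ InvS (LinExt P) ∨
      (u, v) ∈ trCl (CovS (LinExt P)) ∨ (v, u) ∈ trCl (CovS (LinExt P))) ∧
    ¬ (({u, v} : Set N) ∈ InvS (LinExt P) ∧ (u, v) ∈ trCl (CovS (LinExt P))) ∧
    ¬ (({u, v} : Set N) ∈ InvS (LinExt P) ∧ (v, u) ∈ trCl (CovS (LinExt P))) ∧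
    ¬ ((u, v) ∈ trCl (CovS (LinExt P)) ∧ (v, u) ∈ trCl (CovS (LinExt P))) := by

  have htr := trCl_covS_eq P hP
  have hmemuv : (u, v) ∈ trCl (CovS (LinExt P)) ↔ ((u, v) ∈ P ∧ u ≠ v) := by
    rw [htr]; exact Iff.rfl
  have hmemvu : (v, u) ∈ trCl (CovS (LinExt P)) ↔ ((v, u) ∈ P ∧ v ≠ u) := by
    rw [htr]; exact Iff.rfl
  refine ⟨?_, ?_, ?_, ?_⟩
  · by_cases h1 : (u, v) ∈ P
    · exact Or.inr (Or.inl (hmemuv.2 ⟨h1, huv⟩))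
    · by_cases h2 : (v, u) ∈ P
      · exact Or.inr (Or.inr (hmemvu.2 ⟨h2, Ne.symm huv⟩))
      · exact Or.inl (inv_of_incomp P hP huv h1 h2)
  · rintro ⟨ha, hb⟩
    exact (incomp_of_inv P ha).1 (hmemuv.1 hb).1
  · rintro ⟨ha, hc⟩
    exact (incomp_of_inv P ha).2 (hmemvu.1 hc).1
  · rintro ⟨hb, hc⟩
    exact huv (hP.2.1 u v (hmemuv.1 hb).1 (hmemvu.1 hc).1)
end

section
/- Let P be a poset on a finite set N with |N| = n ≥ 2 and S = L(P). Then the cardinality of Inv(S) equals C(n,2) − |P \ Δ|, i.e. the number of two-element subsets {u,v} ⊆ N whose elements are incomparable in P. -/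
open Classical in
lemma exists_linext_adj {N : Type*} [Fintype N] (P : Set (N × N)) (hP : IsPosetOn P)
    {u v : N} (huv : u ≠ v) (h1 : (u, v) ∉ P) (h2 : (v, u) ∉ P) :
    ∃ π ∈ LinExt P, ∃ h : ((π.symm u : Fin (Fintype.card N)) : ℕ) + 1 < Fintype.card N,
      π.symm v = ⟨(π.symm u : ℕ) + 1, h⟩ := by
  obtain ⟨hrefl, hanti, htrans⟩ := hP
  haveI : IsPartialOrder N (fun x y => (x, y) ∈ P) :=
    { refl := hrefl, trans := fun a b c => htrans a b c, antisymm := fun a b => hanti a b }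
  obtain ⟨s, hs, hrs⟩ := extend_partialOrder (fun x y : N => (x, y) ∈ P)
  haveI := hs
  have hs_refl : ∀ a : N, s a a := fun a => refl_of s a
  have hs_trans : ∀ a b c : N, s a b → s b c → s a c := fun a b c => trans_of s
  have hs_anti : ∀ a b : N, s a b → s b a → a = b := fun a b => antisymm_of s
  have hs_total : ∀ a b : N, s a b ∨ s b a := fun a b => total_of s a b
  set block : N → ℕ := fun x =>
    if x = u then 1 else if x = v then 2 else if (x, u) ∈ P ∨ (x, v) ∈ P then 0 else 3 with hblockdef
  have hbu : block u = 1 := by simp [hblockdef]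
  have hbv : block v = 2 := by simp [hblockdef, huv.symm]
  have hb1 : ∀ x, block x = 1 → x = u := by
    intro x hx
    by_contra hxu
    simp only [hblockdef, if_neg hxu] at hx
    split_ifs at hx <;> omega
  have hb2 : ∀ x, block x = 2 → x = v := by
    intro x hx
    by_cases hxu : x = u
    · rw [hxu, hbu] at hx; omega
    by_contra hxv
    simp only [hblockdef, if_neg hxu, if_neg hxv] at hx
    split_ifs at hx <;> omega
  have hble : ∀ x y, (x, y) ∈ P → block x ≤ block y := by
    intro x y hxy
    by_cases hxu : x = u
    · have huy : (u, y) ∈ P := hxu ▸ hxy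
      rw [hxu, hbu]
      by_cases hyu : y = u
      · rw [hyu, hbu]
      by_cases hyv : y = v
      · exact absurd (hyv ▸ huy) h1
      have hnyu : (y, u) ∉ P := fun hc => hyu (hanti _ _ hc huy)
      have hnyv : (y, v) ∉ P := fun hc => h1 (htrans _ _ _ huy hc)
      have : block y = 3 := by
        simp only [hblockdef, if_neg hyu, if_neg hyv, if_neg (by tauto : ¬((y, u) ∈ P ∨ (y, v) ∈ P))]
      omega
    by_cases hxv : x = v
    · have hvy : (v, y) ∈ P := hxv ▸ hxy
      rw [hxv, hbv]
      by_cases hyv : y = v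
      · rw [hyv, hbv]
      by_cases hyu : y = u
      · exact absurd (hyu ▸ hvy) h2
      have hnyu : (y, u) ∉ P := fun hc => h2 (htrans _ _ _ hvy hc)
      have hnyv : (y, v) ∉ P := fun hc => hyv (hanti _ _ hc hvy)
      have : block y = 3 := by
        simp only [hblockdef, if_neg hyu, if_neg hyv, if_neg (by tauto : ¬((y, u) ∈ P ∨ (y, v) ∈ P))]
      omega
    · by_cases hc : (x, u) ∈ P ∨ (x, v) ∈ P
      · have : block x = 0 := by simp only [hblockdef, if_neg hxu, if_neg hxv, if_pos hc]
        omega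
      · have hx3 : block x = 3 := by simp only [hblockdef, if_neg hxu, if_neg hxv, if_neg hc]
        push_neg at hc
        by_cases hyu : y = u
        · exact absurd (hyu ▸ hxy) hc.1
        by_cases hyv : y = v
        · exact absurd (hyv ▸ hxy) hc.2
        have hnyu : (y, u) ∉ P := fun hcc => hc.1 (htrans _ _ _ hxy hcc)
        have hnyv : (y, v) ∉ P := fun hcc => hc.2 (htrans _ _ _ hxy hcc)
        have : block y = 3 := by
          simp only [hblockdef, if_neg hyu, if_neg hyv, if_neg (by tauto : ¬((y, u) ∈ P ∨ (y, v) ∈ P))]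
        omega
  set t : N → N → Prop := fun x y => block x < block y ∨ (block x = block y ∧ s x y) with htdef
  have ht_ext : ∀ x y, (x, y) ∈ P → t x y := by
    intro x y hxy
    rcases lt_or_eq_of_le (hble x y hxy) with h | h
    · exact Or.inl h
    · exact Or.inr ⟨h, hrs _ _ hxy⟩
  letI : LinearOrder N :=
    { le := t
      le_refl := fun a => Or.inr ⟨rfl, hs_refl a⟩
      le_trans := by
        rintro a b c (h | ⟨h, hab⟩) (h' | ⟨h', hbc⟩)
        · exact Or.inl (h.trans h')
        · exact Or.inl (h' ▸ h)
        · exact Or.inl (h ▸ h')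
        · exact Or.inr ⟨h.trans h', hs_trans _ _ _ hab hbc⟩
      le_antisymm := by
        rintro a b (h | ⟨h, hab⟩) (h' | ⟨h', hba⟩)
        · omega
        · omega
        · omega
        · exact hs_anti _ _ hab hba
      le_total := by
        intro a b
        rcases lt_trichotomy (block a) (block b) with h | h | h
        · exact Or.inl (Or.inl h)
        · rcases hs_total a b with hab | hba
          · exact Or.inl (Or.inr ⟨h, hab⟩)
          · exact Or.inr (Or.inr ⟨h.symm, hba⟩)
        · exact Or.inr (Or.inl h)
      toDecidableLE := Classical.decRel t }
  have hle_iff : ∀ x y : N, x ≤ y ↔ t x y := fun _ _ => Iff.rfl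
  let e : Fin (Fintype.card N) ≃o N := monoEquivOfFin N rfl
  have huv' : u < v := by
    refine lt_of_le_of_ne ?_ huv
    rw [hle_iff]; exact Or.inl (by rw [hbu, hbv]; omega)
  have hsymm_lt : e.symm u < e.symm v := by
    rw [← OrderIso.lt_iff_lt e, OrderIso.apply_symm_apply, OrderIso.apply_symm_apply]
    exact huv'
  have hadj : ((e.symm u : Fin (Fintype.card N)) : ℕ) + 1 = ((e.symm v : Fin _) : ℕ) := by
    by_contra hne
    have hlt : ((e.symm u : Fin _) : ℕ) + 1 < ((e.symm v : Fin _) : ℕ) := by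
      have := hsymm_lt
      rw [Fin.lt_def] at this; omega
    set j : Fin (Fintype.card N) := ⟨(e.symm u : ℕ) + 1, lt_trans hlt (e.symm v).isLt⟩ with hj
    set z := e j with hz
    have hzu : u < z := by
      have hj' : e.symm u < j := by rw [Fin.lt_def]; simp [hj]
      have h' := (OrderIso.lt_iff_lt e).2 hj'
      rwa [OrderIso.apply_symm_apply] at h'
    have hzv : z < v := by
      have hj' : j < e.symm v := by rw [Fin.lt_def]; exact hlt
      have h' := (OrderIso.lt_iff_lt e).2 hj'
      rwa [OrderIso.apply_symm_apply] at h'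
    have hb_lo : 1 ≤ block z := by
      rcases (hle_iff u z).1 hzu.le with h | ⟨h, _⟩
      · rw [hbu] at h; omega
      · rw [hbu] at h; omega
    have hb_hi : block z ≤ 2 := by
      rcases (hle_iff z v).1 hzv.le with h | ⟨h, _⟩
      · rw [hbv] at h; omega
      · rw [hbv] at h; omega
    interval_cases h : block z
    · exact absurd (hb1 z h) hzu.ne'
    · exact absurd (hb2 z h) hzv.ne
  refine ⟨e.toEquiv, ?_, ?_, ?_⟩
  · intro p hp
    show e.symm p.1 ≤ e.symm p.2
    rw [← OrderIso.le_iff_le e, OrderIso.apply_symm_apply, OrderIso.apply_symm_apply]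
    exact (hle_iff _ _).2 (ht_ext _ _ hp)
  · show ((e.symm u : Fin _) : ℕ) + 1 < Fintype.card N
    rw [hadj]; exact (e.symm v).isLt
  · exact Fin.ext hadj.symm

lemma invS_linext_eq {N : Type*} [Fintype N] (P : Set (N × N)) (hP : IsPosetOn P) :
    InvS (LinExt P) =
      {L : Set N | ∃ u v : N, u ≠ v ∧ L = {u, v} ∧ (u, v) ∉ P ∧ (v, u) ∉ P} := by
  ext L
  constructor
  · rintro ⟨u, v, huv, hL, π, hπ, σ, hσ, i, h, ⟨hA1, hA2, hA3⟩, hlab⟩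
    refine ⟨u, v, huv, hL, ?_⟩
    have hii : (i : Fin (Fintype.card N)) ≠ ⟨(i : ℕ) + 1, h⟩ := by
      intro hc; have := congrArg Fin.val hc; simp at this
    have hne : π i ≠ π ⟨(i : ℕ) + 1, h⟩ := fun hc => hii (π.injective hc)
    have key : ∀ a b : N, π i = a → π ⟨(i : ℕ) + 1, h⟩ = b → (b, a) ∉ P := by
      intro a b ha hb hab
      have h1 : π.symm a = i := by rw [← ha, Equiv.symm_apply_apply]
      have h2' : π.symm b = ⟨(i : ℕ) + 1, h⟩ := by rw [← hb, Equiv.symm_apply_apply]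
      have := hπ (b, a) hab
      rw [h1, h2'] at this
      have := (Fin.le_def).1 this
      simp at this
    have keyσ : ∀ a b : N, π i = a → π ⟨(i : ℕ) + 1, h⟩ = b → (a, b) ∉ P := by
      intro a b ha hb hab
      have hσ1 : σ i = b := by rw [← hA2, hb]
      have hσ2 : σ ⟨(i : ℕ) + 1, h⟩ = a := by rw [← hA1, ha]
      have h1 : σ.symm b = i := by rw [← hσ1, Equiv.symm_apply_apply]
      have h2' : σ.symm a = ⟨(i : ℕ) + 1, h⟩ := by rw [← hσ2, Equiv.symm_apply_apply]
      have := hσ (a, b) hab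
      rw [h1, h2'] at this
      have := (Fin.le_def).1 this
      simp at this
    rcases Set.pair_eq_pair_iff.1 hlab with ⟨ha, hb⟩ | ⟨ha, hb⟩
    · exact ⟨keyσ u v ha hb, key u v ha hb⟩
    · exact ⟨key v u ha hb, keyσ v u ha hb⟩
  · rintro ⟨u, v, huv, hL, hnuv, hnvu⟩
    haveI := Classical.decEq N
    obtain ⟨π, hπ, h, hadj⟩ := exists_linext_adj P hP huv hnuv hnvu
    set i := π.symm u with hi
    set σ : Enum N := π.trans (Equiv.swap u v) with hσdef
    have hπi : π i = u := Equiv.apply_symm_apply _ _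
    have hπi1 : π ⟨(i : ℕ) + 1, h⟩ = v := by rw [← hadj]; exact Equiv.apply_symm_apply _ _
    have hσapp : ∀ k, σ k = Equiv.swap u v (π k) := fun k => rfl
    have hAT : AdjTranspAt π σ i h := by
      refine ⟨?_, ?_, ?_⟩
      · rw [hσapp, hπi1, Equiv.swap_apply_right, hπi]
      · rw [hσapp, hπi, Equiv.swap_apply_left, hπi1]
      · intro k hk1 hk2
        have hku : π k ≠ u := fun hc => hk1 (by rw [← hπi] at hc; exact π.injective hc)
        have hkv : π k ≠ v := fun hc => hk2 (by rw [← hπi1] at hc; exact π.injective hc)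
        rw [hσapp, Equiv.swap_apply_of_ne_of_ne hku hkv]
    have hσsymm : ∀ x, σ.symm x = π.symm (Equiv.swap u v x) := by
      intro x; simp [hσdef, Equiv.symm_trans_apply]
    have hσmem : σ ∈ LinExt P := by
      intro p hp
      obtain ⟨x, y⟩ := p
      simp only at *
      rw [hσsymm, hσsymm]
      have hle := hπ (x, y) hp
      simp only at hle
      have hvu : (π.symm v : ℕ) = (π.symm u : ℕ) + 1 := by rw [hadj]
      by_cases hxu : x = u
      · by_cases hyv : y = v
        · rw [hxu, hyv] at hp; exact absurd hp hnuv
        by_cases hyu : y = u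
        · rw [hxu, hyu]
        rw [hxu] at hle ⊢
        rw [Equiv.swap_apply_left, Equiv.swap_apply_of_ne_of_ne hyu hyv]
        have hlt : π.symm u < π.symm y :=
          lt_of_le_of_ne hle (fun hc => hyu (π.symm.injective hc).symm)
        rw [Fin.le_def]; rw [Fin.lt_def] at hlt; omega
      by_cases hxv : x = v
      · by_cases hyu : y = u
        · rw [hxv, hyu] at hp; exact absurd hp hnvu
        by_cases hyv : y = v
        · rw [hxv, hyv]
        rw [hxv] at hle ⊢
        rw [Equiv.swap_apply_right, Equiv.swap_apply_of_ne_of_ne hyu hyv]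
        have : π.symm u ≤ π.symm v := by rw [Fin.le_def]; omega
        exact le_trans this hle
      rw [Equiv.swap_apply_of_ne_of_ne hxu hxv]
      by_cases hyu : y = u
      · rw [hyu] at hle ⊢
        rw [Equiv.swap_apply_left]
        have : π.symm u ≤ π.symm v := by rw [Fin.le_def]; omega
        exact le_trans hle this
      by_cases hyv : y = v
      · rw [hyv] at hle ⊢
        rw [Equiv.swap_apply_right]
        have hlt : π.symm x < π.symm v :=
          lt_of_le_of_ne hle (fun hc => hxv (π.symm.injective hc))
        rw [Fin.le_def]; rw [Fin.lt_def] at hlt; omega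
      rw [Equiv.swap_apply_of_ne_of_ne hyu hyv]; exact hle
    exact ⟨u, v, huv, hL, π, hπ, σ, hσmem, i, h, hAT, by rw [hπi, hπi1]⟩

lemma count_incomp {N : Type*} [Fintype N] (P : Set (N × N)) (hP : IsPosetOn P) :
    {L : Set N | ∃ u v : N, u ≠ v ∧ L = {u, v} ∧ (u, v) ∉ P ∧ (v, u) ∉ P}.ncard =
      (Fintype.card N).choose 2 - (P \ diag N).ncard := by
  classical
  obtain ⟨hrefl, hanti, htrans⟩ := hP
  set S2 : Set (Set N) := {L | ∃ u v : N, u ≠ v ∧ L = {u, v} ∧ (u, v) ∉ P ∧ (v, u) ∉ P} with hS2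
  set C2 : Set (Set N) := {L | ∃ u v : N, u ≠ v ∧ L = {u, v} ∧ ((u, v) ∈ P ∨ (v, u) ∈ P)} with hC2
  set All : Set (Set N) := {L | ∃ u v : N, u ≠ v ∧ L = {u, v}} with hAll
  -- All as coe image of 2-element finsets
  have hAll_eq : All = (fun s : Finset N => (s : Set N)) '' {s : Finset N | s.card = 2} := by
    ext L
    constructor
    · rintro ⟨u, v, huv, rfl⟩
      exact ⟨{u, v}, by simp [Finset.card_pair huv], by simp⟩
    · rintro ⟨s, hs, rfl⟩
      obtain ⟨u, v, huv, rfl⟩ := Finset.card_eq_two.1 hs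
      exact ⟨u, v, huv, by simp⟩
  have hAll_card : All.ncard = (Fintype.card N).choose 2 := by
    rw [hAll_eq, Set.ncard_image_of_injective _ Finset.coe_injective]
    have : {s : Finset N | s.card = 2} = ((Finset.univ.powersetCard 2 : Finset (Finset N)) : Set (Finset N)) := by
      ext s; simp [Finset.mem_powersetCard_univ]
    rw [this, Set.ncard_coe_finset, Finset.card_powersetCard, Finset.card_univ]
  have hAll_fin : All.Finite := by
    rw [hAll_eq]; exact (Set.toFinite _).image _
  have hS2sub : S2 ⊆ All := by rintro L ⟨u, v, huv, hL, -⟩; exact ⟨u, v, huv, hL⟩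
  have hC2sub : C2 ⊆ All := by rintro L ⟨u, v, huv, hL, -⟩; exact ⟨u, v, huv, hL⟩
  have hdisj : Disjoint S2 C2 := by
    rw [Set.disjoint_left]
    rintro L ⟨u, v, huv, rfl, hn1, hn2⟩ ⟨u', v', hu'v', hL', hcomp⟩
    rcases Set.pair_eq_pair_iff.1 hL' with ⟨h1, h2⟩ | ⟨h1, h2⟩
    · rw [← h1, ← h2] at hcomp; tauto
    · rw [← h1, ← h2] at hcomp; tauto
  have hunion : S2 ∪ C2 = All := by
    apply Set.Subset.antisymm (Set.union_subset hS2sub hC2sub)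
    rintro L ⟨u, v, huv, rfl⟩
    by_cases hc : (u, v) ∈ P ∨ (v, u) ∈ P
    · exact Or.inr ⟨u, v, huv, rfl, hc⟩
    · push_neg at hc; exact Or.inl ⟨u, v, huv, rfl, hc.1, hc.2⟩
  have hC2_card : C2.ncard = (P \ diag N).ncard := by
    have himg : C2 = (fun p : N × N => ({p.1, p.2} : Set N)) '' (P \ diag N) := by
      ext L
      constructor
      · rintro ⟨u, v, huv, rfl, hc | hc⟩
        · exact ⟨(u, v), ⟨hc, huv⟩, rfl⟩
        · exact ⟨(v, u), ⟨hc, Ne.symm huv⟩, by simp [Set.pair_comm]⟩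
      · rintro ⟨⟨a, b⟩, ⟨hab, hne⟩, rfl⟩
        exact ⟨a, b, hne, rfl, Or.inl hab⟩
    rw [himg]
    apply Set.ncard_image_of_injOn
    rintro ⟨a, b⟩ ⟨hab, hne⟩ ⟨a', b'⟩ ⟨hab', hne'⟩ hEq
    simp only at hEq
    rcases Set.pair_eq_pair_iff.1 hEq with ⟨h1, h2⟩ | ⟨h1, h2⟩
    · rw [h1, h2]
    · exfalso; rw [h1, h2] at hab; exact hne' (hanti _ _ hab' hab)
  have hsum : S2.ncard + C2.ncard = All.ncard := by
    rw [← hunion, Set.ncard_union_eq hdisj (hAll_fin.subset hS2sub) (hAll_fin.subset hC2sub)]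
  have hle : C2.ncard ≤ All.ncard := by omega
  omega

/-- For a poset `P` on `N`, `|N| = n ≥ 2`, and `S = L(P)`:
`|Inv(S)| = C(n,2) − |P \ Δ|`, i.e. `|Inv(S)|` is the number of two-element subsets
`{u,v} ⊆ N` whose elements are incomparable in `P`. -/
theorem stmt14 {N : Type*} [Fintype N] (h2 : 2 ≤ Fintype.card N)
    (P : Set (N × N)) (hP : IsPosetOn P) :
    (InvS (LinExt P)).ncard = (Fintype.card N).choose 2 - (P \ diag N).ncard ∧
    (InvS (LinExt P)).ncard =
      {L : Set N | ∃ u v : N, u ≠ v ∧ L = {u, v} ∧ (u, v) ∉ P ∧ (v, u) ∉ P}.ncard := by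
  refine ⟨?_, ?_⟩ <;> rw [invS_linext_eq P hP]
  exact count_incomp P hP
end

section
/- Let N be a finite set with |N| ≥ 2, let δ be a fixed enumeration of N with associated total order T_δ = {(u,v) : u ≼_δ v}, and let P be a poset on N. Put A = (T_δ ∩ P^op) \ Δ and B = T_δ \ P, where P^op = {(v,u) : (u,v) ∈ P}. Then A ⊆ B ⊆ T_δ \ Δ, and L(P) = {π enumeration of N : A ⊆ T_δ \ T_π ⊆ B}, where T_π = {(u,v) : u ≼_π v}. -/
/-- Let `|N| ≥ 2`, `δ` a fixed enumeration of `N` with total order `T_δ`,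
and `P` a poset on `N`. With `A = (T_δ ∩ P^op) \ Δ` and `B = T_δ \ P` one has
`A ⊆ B ⊆ T_δ \ Δ` and `L(P) = {π : A ⊆ T_δ \ T_π ⊆ B}`. -/
theorem stmt15 {N : Type*} [Fintype N] (h2 : 2 ≤ Fintype.card N)
    (δ : Enum N) (P : Set (N × N)) (hP : IsPosetOn P) :
    ((Tord δ ∩ {p : N × N | (p.2, p.1) ∈ P}) \ diag N ⊆ Tord δ \ P) ∧
    (Tord δ \ P ⊆ Tord δ \ diag N) ∧
    LinExt P = {π : Enum N |
      (Tord δ ∩ {p : N × N | (p.2, p.1) ∈ P}) \ diag N ⊆ Tord δ \ Tord π ∧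
      Tord δ \ Tord π ⊆ Tord δ \ P} := by
  obtain ⟨hrefl, hanti, htrans⟩ := hP
  refine ⟨?_, ?_, ?_⟩
  · rintro ⟨u, v⟩ ⟨⟨hδ, hop⟩, hd⟩
    exact ⟨hδ, fun hP' => hd (hanti u v hP' hop)⟩
  · rintro ⟨u, v⟩ ⟨hδ, hnp⟩
    refine ⟨hδ, fun hd => hnp ?_⟩
    have huv : u = v := hd
    exact huv ▸ hrefl u
  · ext π
    simp only [LinExt, Set.mem_setOf_eq]
    constructor
    · intro hπ
      constructor
      · rintro ⟨u, v⟩ ⟨⟨hδ, hop⟩, hd⟩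
        refine ⟨hδ, fun hT => hd ?_⟩
        have h1 := hπ (v, u) hop
        exact π.symm.injective (le_antisymm hT h1)
      · rintro ⟨u, v⟩ ⟨hδ, hnT⟩
        exact ⟨hδ, fun hPuv => hnT (hπ (u, v) hPuv)⟩
    · rintro ⟨hA, hB⟩ ⟨u, v⟩ hPuv
      by_contra hlt
      push_neg at hlt
      rcases le_or_gt (δ.symm u) (δ.symm v) with hδ | hδ
      · exact (hB ⟨hδ, not_le.mpr hlt⟩).2 hPuv
      · have hne : (v, u) ∉ diag N := fun h => by
          have : v = u := h
          subst this; exact lt_irrefl _ hδ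
        have := hA (⟨⟨hδ.le, hPuv⟩, hne⟩ :
          (v, u) ∈ (Tord δ ∩ {p : N × N | (p.2, p.1) ∈ P}) \ diag N)
        exact this.2 hlt.le
end

section
/- Let N be a finite set with |N| ≥ 2 and let δ be a fixed enumeration of N with associated total order T_δ = {(u,v) : u ≼_δ v}. A set S of enumerations of N has the form S = {π : A ⊆ T_δ \ T_π ⊆ B} for some pair of subsets A, B of T_δ \ Δ if and only if S is geodetically convex in the permutohedral graph. -/
section Aux

set_option linter.unusedSectionVars false

open Finset

variable {N : Type*} [Fintype N] [DecidableEq N]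

noncomputable def invF (δ π : Enum N) : Finset (N × N) :=
  (Set.toFinite (Tord δ \ Tord π)).toFinset

lemma mem_invF' {δ π : Enum N} {p : N × N} :
    p ∈ invF δ π ↔ p ∈ Tord δ \ Tord π := Set.Finite.mem_toFinset _

lemma mem_invF {δ π : Enum N} {p : N × N} :
    p ∈ invF δ π ↔ δ.symm p.1 ≤ δ.symm p.2 ∧ π.symm p.2 < π.symm p.1 := by
  rw [mem_invF']; simp [Tord, Set.mem_diff, not_le]

lemma strictMono_fin_id {n : ℕ} {f : Fin n → Fin n} (hf : StrictMono f) : ∀ i, f i = i := by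
  have hsurj : Function.Surjective f := (Finite.injective_iff_bijective.mp hf.injective).2
  have he : StrictMono.orderIsoOfSurjective f hf hsurj = OrderIso.refl (Fin n) :=
    Subsingleton.elim _ _
  intro i
  have : (StrictMono.orderIsoOfSurjective f hf hsurj) i = i := by rw [he]; rfl
  rwa [StrictMono.coe_orderIsoOfSurjective] at this

lemma enum_eq_of_strictMono {π σ : Enum N}
    (hsm : StrictMono (fun k => σ.symm (π k))) : π = σ := by
  apply Equiv.ext
  intro k
  exact (Equiv.symm_apply_eq σ).mp (strictMono_fin_id hsm k)

/-- helper to flip a strict-order iff -/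
lemma lt_flip {α β : Type*} [LinearOrder α] [LinearOrder β] {a b : α} {c d : β}
    (h : b < a ↔ d < c) (hab : a ≠ b) (hcd : c ≠ d) : a < b ↔ c < d := by
  constructor
  · intro h1
    rcases lt_trichotomy c d with h2 | h2 | h2
    · exact h2
    · exact absurd h2 hcd
    · exact absurd (h.mpr h2) (asymm h1)
  · intro h1
    rcases lt_trichotomy a b with h2 | h2 | h2
    · exact h2
    · exact absurd h2 hab
    · exact absurd (h.mp h2) (asymm h1)

lemma invF_inj {δ π σ : Enum N} (h : invF δ π = invF δ σ) : π = σ := by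
  have key : ∀ u v : N, π.symm u < π.symm v ↔ σ.symm u < σ.symm v := by
    intro u v
    rcases eq_or_ne u v with rfl | huv
    · simp
    have hm : ∀ w z : N, ((w, z) ∈ invF δ π ↔ (w, z) ∈ invF δ σ) := by
      intro w z; rw [h]
    rcases le_total (δ.symm u) (δ.symm v) with hd | hd
    · have h1 := (hm u v)
      rw [mem_invF, mem_invF] at h1
      simp only [hd, true_and] at h1
      exact lt_flip h1 (fun e => huv (π.symm.injective e))
        (fun e => huv (σ.symm.injective e))
    · have h1 := (hm v u)
      rw [mem_invF, mem_invF] at h1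
      simp only [hd, true_and] at h1
      exact h1
  apply enum_eq_of_strictMono
  intro a b hab
  have := (key (π a) (π b)).mp (by simpa using hab)
  simpa using this

lemma swap_lt_iff {n : ℕ} (i : Fin n) (h : (i : ℕ) + 1 < n) (a b : Fin n)
    (hne : ¬((a = i ∧ b = ⟨(i : ℕ) + 1, h⟩) ∨ (a = ⟨(i : ℕ) + 1, h⟩ ∧ b = i))) :
    Equiv.swap i ⟨(i : ℕ) + 1, h⟩ a < Equiv.swap i ⟨(i : ℕ) + 1, h⟩ b ↔ a < b := by
  set j : Fin n := ⟨(i : ℕ) + 1, h⟩ with hj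
  have hjv : (j : ℕ) = (i : ℕ) + 1 := rfl
  have hijne : i ≠ j := by
    intro e; have := congrArg Fin.val e; omega
  rcases eq_or_ne a i with ha1 | ha1
  · rcases eq_or_ne b i with hb1 | hb1
    · rw [ha1, hb1]; simp
    rcases eq_or_ne b j with hb2 | hb2
    · exact absurd (Or.inl ⟨ha1, hb2⟩) hne
    rw [ha1, Equiv.swap_apply_left, Equiv.swap_apply_of_ne_of_ne hb1 hb2]
    have h1 : (b : ℕ) ≠ (i : ℕ) := fun e => hb1 (Fin.ext e)
    have h2 : (b : ℕ) ≠ (i : ℕ) + 1 := fun e => hb2 (Fin.ext e)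
    have h3 : (a : ℕ) = (i : ℕ) := congrArg Fin.val ha1
    simp only [Fin.lt_def]; omega
  rcases eq_or_ne a j with ha2 | ha2
  · rcases eq_or_ne b i with hb1 | hb1
    · exact absurd (Or.inr ⟨ha2, hb1⟩) hne
    rcases eq_or_ne b j with hb2 | hb2
    · rw [ha2, hb2]; simp
    rw [ha2, Equiv.swap_apply_right, Equiv.swap_apply_of_ne_of_ne hb1 hb2]
    have h1 : (b : ℕ) ≠ (i : ℕ) := fun e => hb1 (Fin.ext e)
    have h2 : (b : ℕ) ≠ (i : ℕ) + 1 := fun e => hb2 (Fin.ext e)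
    have h3 : (a : ℕ) = (i : ℕ) + 1 := congrArg Fin.val ha2
    simp only [Fin.lt_def]; omega
  · have h1 : (a : ℕ) ≠ (i : ℕ) := fun e => ha1 (Fin.ext e)
    have h2 : (a : ℕ) ≠ (i : ℕ) + 1 := fun e => ha2 (Fin.ext e)
    rw [Equiv.swap_apply_of_ne_of_ne ha1 ha2]
    rcases eq_or_ne b i with hb1 | hb1
    · rw [hb1, Equiv.swap_apply_left]
      have h3 : (b : ℕ) = (i : ℕ) := congrArg Fin.val hb1
      simp only [Fin.lt_def]; omega
    rcases eq_or_ne b j with hb2 | hb2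
    · rw [hb2, Equiv.swap_apply_right]
      have h3 : (b : ℕ) = (i : ℕ) + 1 := congrArg Fin.val hb2
      simp only [Fin.lt_def]; omega
    · rw [Equiv.swap_apply_of_ne_of_ne hb1 hb2]

lemma invF_swap_eq (δ π : Enum N) (i : Fin (Fintype.card N)) (h : (i : ℕ) + 1 < Fintype.card N)
    (q : N × N) (hq : ({q.1, q.2} : Set N) = {π i, π ⟨(i : ℕ) + 1, h⟩})
    (hqd : δ.symm q.1 ≤ δ.symm q.2) :
    invF δ ((Equiv.swap i ⟨(i : ℕ) + 1, h⟩).trans π) = symmDiff (invF δ π) {q} := by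
  set j : Fin (Fintype.card N) := ⟨(i : ℕ) + 1, h⟩ with hjdef
  have hjv : (j : ℕ) = (i : ℕ) + 1 := rfl
  set x := π i with hx
  set y := π j with hy
  have hij : i ≠ j := by intro e; have := congrArg Fin.val e; omega
  have hxy : x ≠ y := fun e => hij (π.injective e)
  have hq' : (q.1 = x ∧ q.2 = y) ∨ (q.1 = y ∧ q.2 = x) := Set.pair_eq_pair_iff.mp hq
  have hsymm : ∀ u, ((Equiv.swap i j).trans π).symm u = Equiv.swap i j (π.symm u) := by
    intro u; simp
  have hsx : π.symm x = i := by rw [hx]; simp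
  have hsy : π.symm y = j := by rw [hy]; simp
  have hiltj : i < j := by rw [Fin.lt_def]; omega
  have hnjlti : ¬ j < i := by rw [Fin.lt_def]; omega
  ext p
  obtain ⟨p1, p2⟩ := p
  rw [Finset.mem_symmDiff]
  simp only [Finset.mem_singleton, mem_invF, hsymm]
  by_cases hp1 : (p1, p2) = (x, y)
  · simp only [Prod.mk.injEq] at hp1
    obtain ⟨e1, e2⟩ := hp1; subst e1; subst e2
    simp only [hsx, hsy, Equiv.swap_apply_left, Equiv.swap_apply_right]
    rcases hq' with ⟨f1, f2⟩ | ⟨f1, f2⟩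
    · have heq : (x, y) = q := by rw [Prod.ext_iff]; exact ⟨f1.symm, f2.symm⟩
      have hqd' : δ.symm x ≤ δ.symm y := by rw [f1, f2] at hqd; exact hqd
      simp [heq, hqd', hiltj, hnjlti]
    · have hδ : ¬ δ.symm x ≤ δ.symm y := by
        intro le
        have hqd2 : δ.symm y ≤ δ.symm x := by rw [f1, f2] at hqd; exact hqd
        exact hxy (δ.symm.injective (le_antisymm le hqd2))
      have hneq : (x, y) ≠ q := by
        intro e; rw [Prod.ext_iff] at e
        exact hxy (e.1.trans f1)
      simp [hδ, hneq]
  · by_cases hp2 : (p1, p2) = (y, x)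
    · simp only [Prod.mk.injEq] at hp2
      obtain ⟨e1, e2⟩ := hp2; subst e1; subst e2
      simp only [hsx, hsy, Equiv.swap_apply_left, Equiv.swap_apply_right]
      rcases hq' with ⟨f1, f2⟩ | ⟨f1, f2⟩
      · have hδ : ¬ δ.symm y ≤ δ.symm x := by
          intro le
          have hqd2 : δ.symm x ≤ δ.symm y := by rw [f1, f2] at hqd; exact hqd
          exact hxy (δ.symm.injective (le_antisymm hqd2 le))
        have hneq : (y, x) ≠ q := by
          intro e; rw [Prod.ext_iff] at e
          exact hxy (f1 ▸ e.1).symm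
        simp [hδ, hneq, hnjlti]
      · have heq : (y, x) = q := by rw [Prod.ext_iff]; exact ⟨f1.symm, f2.symm⟩
        have hqd' : δ.symm y ≤ δ.symm x := by rw [f1, f2] at hqd; exact hqd
        simp [heq, hqd', hiltj, hnjlti]
    · have hne : ¬((π.symm p2 = i ∧ π.symm p1 = j) ∨ (π.symm p2 = j ∧ π.symm p1 = i)) := by
        rintro (⟨e1, e2⟩ | ⟨e1, e2⟩)
        · exact hp2 (by rw [Prod.mk.injEq]
                        exact ⟨(Equiv.symm_apply_eq π).mp e2, (Equiv.symm_apply_eq π).mp e1⟩)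
        · exact hp1 (by rw [Prod.mk.injEq]
                        exact ⟨(Equiv.symm_apply_eq π).mp e2, (Equiv.symm_apply_eq π).mp e1⟩)
      rw [swap_lt_iff i h _ _ hne]
      have hpq : (p1, p2) ≠ q := by
        rcases hq' with ⟨f1, f2⟩ | ⟨f1, f2⟩
        · intro e; apply hp1; rw [e, Prod.mk.injEq]; exact ⟨f1, f2⟩
        · intro e; apply hp2; rw [e, Prod.mk.injEq]; exact ⟨f1, f2⟩
      simp [hpq]


lemma adj_swap (π : Enum N) (i : Fin (Fintype.card N)) (h : (i : ℕ) + 1 < Fintype.card N) :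
    (permGraph N).Adj π ((Equiv.swap i ⟨(i : ℕ) + 1, h⟩).trans π) := by
  refine ⟨i, h, ?_, ?_, ?_⟩
  · simp [Equiv.trans_apply, Equiv.swap_apply_right]
  · simp [Equiv.trans_apply, Equiv.swap_apply_left]
  · intro k hk1 hk2
    simp [Equiv.trans_apply, Equiv.swap_apply_of_ne_of_ne hk1 hk2]

lemma eq_swap_of_adjAt {π σ : Enum N} {i : Fin (Fintype.card N)}
    {h : (i : ℕ) + 1 < Fintype.card N} (H : AdjTranspAt π σ i h) :
    σ = (Equiv.swap i ⟨(i : ℕ) + 1, h⟩).trans π := by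
  obtain ⟨H1, H2, H3⟩ := H
  apply Equiv.ext; intro k
  rcases eq_or_ne k i with rfl | hk1
  · rw [Equiv.trans_apply, Equiv.swap_apply_left]; exact H2.symm
  rcases eq_or_ne k ⟨(i : ℕ) + 1, h⟩ with rfl | hk2
  · rw [Equiv.trans_apply, Equiv.swap_apply_right]; exact H1.symm
  · rw [Equiv.trans_apply, Equiv.swap_apply_of_ne_of_ne hk1 hk2]; exact (H3 k hk1 hk2).symm

lemma exists_descent {π σ : Enum N} (hne : π ≠ σ) :
    ∃ (i : Fin (Fintype.card N)) (h : (i : ℕ) + 1 < Fintype.card N),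
      σ.symm (π ⟨(i : ℕ) + 1, h⟩) < σ.symm (π i) := by
  by_contra hcon
  push_neg at hcon
  apply hne
  apply enum_eq_of_strictMono
  have key : ∀ (d : ℕ) (a b : Fin (Fintype.card N)), (b : ℕ) = (a : ℕ) + d →
      σ.symm (π a) ≤ σ.symm (π b) := by
    intro d
    induction d with
    | zero =>
      intro a b hd
      have : a = b := Fin.ext (by omega)
      rw [this]
    | succ d ih =>
      intro a b hd
      have hblt := b.isLt
      have hlt : (a : ℕ) + d < Fintype.card N := by omega
      have h1 := ih a ⟨(a : ℕ) + d, hlt⟩ rfl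
      have hlt2 : ((⟨(a : ℕ) + d, hlt⟩ : Fin (Fintype.card N)) : ℕ) + 1 < Fintype.card N := by
        simp only [Fin.val_mk]; omega
      have h2 := hcon ⟨(a : ℕ) + d, hlt⟩ hlt2
      have hb : b = ⟨((⟨(a : ℕ) + d, hlt⟩ : Fin (Fintype.card N)) : ℕ) + 1, hlt2⟩ :=
        Fin.ext (by simp only [Fin.val_mk]; omega)
      rw [hb]
      exact h1.trans h2
  have hmono : Monotone (fun k => σ.symm (π k)) := by
    intro a b hab
    exact key ((b : ℕ) - (a : ℕ)) a b (by omega)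
  exact hmono.strictMono_of_injective
    (fun a b hab => π.injective (σ.symm.injective hab))

lemma exists_step (δ : Enum N) {π σ : Enum N} (hne : π ≠ σ) :
    ∃ (π' : Enum N) (q : N × N), (permGraph N).Adj π π' ∧
      invF δ π' = symmDiff (invF δ π) {q} ∧ q ∈ symmDiff (invF δ π) (invF δ σ) := by
  obtain ⟨i, h, hdesc⟩ := exists_descent hne
  set j : Fin (Fintype.card N) := ⟨(i : ℕ) + 1, h⟩ with hjdef
  have hjv : (j : ℕ) = (i : ℕ) + 1 := rfl
  set x := π i with hx
  set y := π j with hy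
  have hij : i ≠ j := by intro e; have := congrArg Fin.val e; omega
  have hxy : x ≠ y := fun e => hij (π.injective e)
  have hsx : π.symm x = i := by rw [hx]; simp
  have hsy : π.symm y = j := by rw [hy]; simp
  have hiltj : i < j := by rw [Fin.lt_def]; omega
  rcases le_total (δ.symm x) (δ.symm y) with hd | hd
  · refine ⟨(Equiv.swap i j).trans π, (x, y), adj_swap π i h,
      invF_swap_eq δ π i h (x, y) rfl hd, ?_⟩
    rw [Finset.mem_symmDiff]
    right
    constructor
    · rw [mem_invF]; exact ⟨hd, hdesc⟩
    · rw [mem_invF]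
      rintro ⟨-, hc⟩
      rw [hsx, hsy] at hc
      exact absurd hiltj (asymm hc)
  · refine ⟨(Equiv.swap i j).trans π, (y, x), adj_swap π i h,
      invF_swap_eq δ π i h (y, x) (Set.pair_comm y x) hd, ?_⟩
    rw [Finset.mem_symmDiff]
    left
    constructor
    · rw [mem_invF]
      refine ⟨hd, ?_⟩
      rw [hsx, hsy]
      exact hiltj
    · rw [mem_invF]
      rintro ⟨-, hc⟩
      exact absurd hdesc (asymm hc)

lemma card_symmDiff_singleton_mem {α : Type*} [DecidableEq α] {s : Finset α} {q : α}
    (hq : q ∈ s) : (symmDiff s {q}).card = s.card - 1 := by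
  have he : symmDiff s {q} = s.erase q := by
    ext a
    rw [Finset.mem_symmDiff, Finset.mem_erase]
    simp only [Finset.mem_singleton]
    constructor
    · rintro (⟨h1, h2⟩ | ⟨h1, h2⟩)
      · exact ⟨h2, h1⟩
      · exact absurd (h1 ▸ hq) h2
    · rintro ⟨h1, h2⟩; exact Or.inl ⟨h2, h1⟩
  rw [he, Finset.card_erase_of_mem hq]

lemma card_symmDiff_triangle {α : Type*} [DecidableEq α] (s t u : Finset α) :
    (symmDiff s u).card ≤ (symmDiff s t).card + (symmDiff t u).card :=
  le_trans (Finset.card_le_card (symmDiff_triangle s t u)) (Finset.card_union_le _ _)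

lemma walk_le_card (δ : Enum N) : ∀ (k : ℕ) (π σ : Enum N),
    (symmDiff (invF δ π) (invF δ σ)).card = k →
    ∃ p : (permGraph N).Walk π σ, p.length = k := by
  intro k
  induction k using Nat.strong_induction_on with
  | _ k ih =>
    intro π σ hk
    rcases eq_or_ne π σ with rfl | hne
    · refine ⟨SimpleGraph.Walk.nil, ?_⟩
      rw [symmDiff_self] at hk
      simp at hk
      simp [← hk]
    · obtain ⟨π', q, hadj, hinv, hqmem⟩ := exists_step δ hne
      have hkpos : 0 < k := by
        rw [← hk]
        exact Finset.card_pos.mpr ⟨q, hqmem⟩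
      have hcard : (symmDiff (invF δ π') (invF δ σ)).card = k - 1 := by
        rw [hinv]
        have hre : symmDiff (symmDiff (invF δ π) {q}) (invF δ σ)
            = symmDiff (symmDiff (invF δ π) (invF δ σ)) {q} := by
          rw [symmDiff_assoc, symmDiff_assoc, symmDiff_comm ({q} : Finset (N × N))]
        rw [hre, card_symmDiff_singleton_mem hqmem, hk]
      obtain ⟨p, hp⟩ := ih (k - 1) (by omega) π' σ hcard
      exact ⟨SimpleGraph.Walk.cons hadj p, by
        rw [SimpleGraph.Walk.length_cons, hp]; omega⟩

lemma card_le_walk (δ : Enum N) {π σ : Enum N} (p : (permGraph N).Walk π σ) :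
    (symmDiff (invF δ π) (invF δ σ)).card ≤ p.length := by
  induction p with
  | nil => simp [symmDiff_self]
  | @cons a b c hadj p ih =>
    obtain ⟨i, h, H⟩ := hadj
    have hb : b = (Equiv.swap i ⟨(i : ℕ) + 1, h⟩).trans a := eq_swap_of_adjAt H
    subst hb
    have hone : (symmDiff (invF δ a)
        (invF δ ((Equiv.swap i ⟨(i : ℕ) + 1, h⟩).trans a))).card ≤ 1 := by
      rcases le_total (δ.symm (a i)) (δ.symm (a ⟨(i : ℕ) + 1, h⟩)) with hd | hd
      · rw [invF_swap_eq δ a i h (a i, a ⟨(i : ℕ) + 1, h⟩) rfl hd,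
          symmDiff_symmDiff_cancel_left]
        simp
      · rw [invF_swap_eq δ a i h (a ⟨(i : ℕ) + 1, h⟩, a i)
          (Set.pair_comm (a ⟨(i : ℕ) + 1, h⟩) (a i)) hd, symmDiff_symmDiff_cancel_left]
        simp
    have := card_symmDiff_triangle (invF δ a)
      (invF δ ((Equiv.swap i ⟨(i : ℕ) + 1, h⟩).trans a)) (invF δ c)
    show _ ≤ p.length + 1
    omega

lemma dist_eq (δ : Enum N) (π σ : Enum N) :
    (permGraph N).dist π σ = (symmDiff (invF δ π) (invF δ σ)).card := by
  obtain ⟨p, hp⟩ := walk_le_card δ _ π σ rfl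
  apply le_antisymm
  · exact hp ▸ SimpleGraph.dist_le p
  · obtain ⟨p', hp'⟩ := p.reachable.exists_walk_length_eq_dist
    exact hp' ▸ card_le_walk δ p'

lemma card_between_iff {α : Type*} [DecidableEq α] (P T Q : Finset α) :
    (symmDiff P T).card + (symmDiff T Q).card = (symmDiff P Q).card ↔
      (P ∩ Q ⊆ T ∧ T ⊆ P ∪ Q) := by
  constructor
  · intro hsum
    have hsub : symmDiff P Q ⊆ symmDiff P T ∪ symmDiff T Q := symmDiff_triangle P T Q
    have hint : (symmDiff P T ∩ symmDiff T Q).card = 0 := by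
      have h1 := Finset.card_union_add_card_inter (symmDiff P T) (symmDiff T Q)
      have h2 := Finset.card_le_card hsub
      omega
    have hint' : symmDiff P T ∩ symmDiff T Q = ∅ := Finset.card_eq_zero.mp hint
    constructor
    · intro x hx
      rw [Finset.mem_inter] at hx
      by_contra hxT
      have hmem : x ∈ symmDiff P T ∩ symmDiff T Q := by
        rw [Finset.mem_inter, Finset.mem_symmDiff, Finset.mem_symmDiff]
        exact ⟨Or.inl ⟨hx.1, hxT⟩, Or.inr ⟨hx.2, hxT⟩⟩
      rw [hint'] at hmem
      exact absurd hmem (Finset.notMem_empty x)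
    · intro x hx
      by_contra hxPQ
      rw [Finset.mem_union] at hxPQ
      push_neg at hxPQ
      have hmem : x ∈ symmDiff P T ∩ symmDiff T Q := by
        rw [Finset.mem_inter, Finset.mem_symmDiff, Finset.mem_symmDiff]
        exact ⟨Or.inr ⟨hx, hxPQ.1⟩, Or.inl ⟨hx, hxPQ.2⟩⟩
      rw [hint'] at hmem
      exact absurd hmem (Finset.notMem_empty x)
  · rintro ⟨h1, h2⟩
    have hPQT : ∀ x, x ∈ P → x ∈ Q → x ∈ T :=
      fun x hp hq => h1 (Finset.mem_inter.mpr ⟨hp, hq⟩)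
    have hTPQ : ∀ x, x ∈ T → x ∈ P ∨ x ∈ Q := fun x ht => Finset.mem_union.mp (h2 ht)
    have hdisj : symmDiff P T ∩ symmDiff T Q = ∅ := by
      ext x
      simp only [Finset.mem_inter, Finset.mem_symmDiff, Finset.notMem_empty, iff_false]
      have hx1 := hPQT x
      have hx2 := hTPQ x
      tauto
    have hunion : symmDiff P T ∪ symmDiff T Q = symmDiff P Q := by
      ext x
      simp only [Finset.mem_union, Finset.mem_symmDiff]
      have hx1 := hPQT x
      have hx2 := hTPQ x
      tauto
    have h3 := Finset.card_union_add_card_inter (symmDiff P T) (symmDiff T Q)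
    rw [hdisj, hunion] at h3
    simp at h3
    omega

lemma Tord_diff_subset (δ π : Enum N) : Tord δ \ Tord π ⊆ Tord δ \ diag N := by
  rintro p ⟨h1, h2⟩
  refine ⟨h1, fun hd => h2 ?_⟩
  show π.symm p.1 ≤ π.symm p.2
  rw [show p.1 = p.2 from hd]

end Aux

/-- Let `|N| ≥ 2` and `δ` a fixed enumeration of `N` with total order `T_δ`.
A set `S` of enumerations has the form `S = {π : A ⊆ T_δ \ T_π ⊆ B}` for some subsets
`A, B ⊆ T_δ \ Δ` iff `S` is geodetically convex in the permutohedral graph. -/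
theorem stmt16 {N : Type*} [Fintype N] (h2 : 2 ≤ Fintype.card N)
    (δ : Enum N) (S : Set (Enum N)) :
    (∃ A B : Set (N × N), A ⊆ Tord δ \ diag N ∧ B ⊆ Tord δ \ diag N ∧
      S = {π : Enum N | A ⊆ Tord δ \ Tord π ∧ Tord δ \ Tord π ⊆ B}) ↔
    GeodConvex S := by

  classical
  constructor
  · rintro ⟨A, B, hA, hB, rfl⟩
    intro π hπ σ hσ τ hdist
    rw [dist_eq δ π τ, dist_eq δ τ σ, dist_eq δ π σ] at hdist
    obtain ⟨hT1, hT2⟩ := (card_between_iff (invF δ π) (invF δ τ) (invF δ σ)).mp hdist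
    constructor
    · intro p hp
      have hpπ : p ∈ invF δ π := mem_invF'.mpr (hπ.1 hp)
      have hpσ : p ∈ invF δ σ := mem_invF'.mpr (hσ.1 hp)
      exact mem_invF'.mp (hT1 (Finset.mem_inter.mpr ⟨hpπ, hpσ⟩))
    · intro p hp
      have hpτ : p ∈ invF δ τ := mem_invF'.mpr hp
      rcases Finset.mem_union.mp (hT2 hpτ) with hm | hm
      · exact hπ.2 (mem_invF'.mp hm)
      · exact hσ.2 (mem_invF'.mp hm)
  · intro hconv
    rcases Set.eq_empty_or_nonempty S with rfl | ⟨π₀, hπ₀⟩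
    · have h01 : (0 : ℕ) < Fintype.card N := by omega
      refine ⟨{(δ ⟨0, h01⟩, δ ⟨1, h2⟩)}, ∅, ?_, ?_, ?_⟩
      · rintro p hp
        rw [Set.mem_singleton_iff] at hp
        subst hp
        constructor
        · show δ.symm (δ ⟨0, h01⟩) ≤ δ.symm (δ ⟨1, h2⟩)
          simp
        · show ¬ (δ ⟨0, h01⟩ = δ ⟨1, h2⟩)
          intro e
          have := congrArg Fin.val (δ.injective e)
          simp at this
      · exact Set.empty_subset _
      · ext π
        simp only [Set.mem_empty_iff_false, Set.mem_setOf_eq, false_iff]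
        rintro ⟨hA, hB⟩
        exact hB (hA (Set.mem_singleton _))
    · refine ⟨⋂ π ∈ S, (Tord δ \ Tord π), ⋃ π ∈ S, (Tord δ \ Tord π), ?_, ?_, ?_⟩
      · intro p hp
        exact Tord_diff_subset δ π₀ (Set.mem_iInter₂.mp hp π₀ hπ₀)
      · intro p hp
        obtain ⟨π, hπ, hm⟩ := Set.mem_iUnion₂.mp hp
        exact Tord_diff_subset δ π hm
      · ext τ
        simp only [Set.mem_setOf_eq]
        constructor
        · intro hτ
          refine ⟨Set.iInter₂_subset τ hτ, ?_⟩
          intro p hp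
          exact Set.mem_iUnion₂.mpr ⟨τ, hτ, hp⟩
        · rintro ⟨hAτ, hBτ⟩
          obtain ⟨π, hπS, hmin⟩ := Set.exists_min_image S
            (fun π => (symmDiff (invF δ π) (invF δ τ)).card) (Set.toFinite S) ⟨π₀, hπ₀⟩
          by_contra hτS
          have hne : π ≠ τ := fun e => hτS (e ▸ hπS)
          obtain ⟨π', q, hadj, hinv, hqmem⟩ := exists_step δ hne
          -- π' is strictly closer to τ than π
          have hcard : (symmDiff (invF δ π') (invF δ τ)).card
              < (symmDiff (invF δ π) (invF δ τ)).card := by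
            have hre : symmDiff (symmDiff (invF δ π) {q}) (invF δ τ)
                = symmDiff (symmDiff (invF δ π) (invF δ τ)) {q} := by
              rw [symmDiff_assoc, symmDiff_assoc, symmDiff_comm ({q} : Finset (N × N))]
            have hpos : 0 < (symmDiff (invF δ π) (invF δ τ)).card :=
              Finset.card_pos.mpr ⟨q, hqmem⟩
            rw [hinv, hre, card_symmDiff_singleton_mem hqmem]
            omega
          -- find σ ∈ S with π' between π and σ
          have hπ'S : π' ∈ S := by
            rw [Finset.mem_symmDiff] at hqmem
            rcases hqmem with ⟨hq1, hq2⟩ | ⟨hq1, hq2⟩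
            · -- q ∈ invF π, q ∉ invF τ ; use A
              have hqA : q ∉ ⋂ π ∈ S, (Tord δ \ Tord π) :=
                fun hm => hq2 (mem_invF'.mpr (hAτ hm))
              rw [Set.mem_iInter₂] at hqA
              push_neg at hqA
              obtain ⟨σ, hσS, hqσ⟩ := hqA
              have hqσ' : q ∉ invF δ σ := fun hm => hqσ (mem_invF'.mp hm)
              have hbet : (symmDiff (invF δ π) (invF δ π')).card
                  + (symmDiff (invF δ π') (invF δ σ)).card
                  = (symmDiff (invF δ π) (invF δ σ)).card := by
                rw [card_between_iff]
                constructor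
                · intro x hx
                  rw [Finset.mem_inter] at hx
                  rw [hinv, Finset.mem_symmDiff]
                  left
                  refine ⟨hx.1, ?_⟩
                  rw [Finset.mem_singleton]
                  intro e; subst e
                  exact hqσ' hx.2
                · intro x hx
                  rw [hinv, Finset.mem_symmDiff] at hx
                  rcases hx with ⟨hx1, -⟩ | ⟨hx1, hx2⟩
                  · exact Finset.mem_union.mpr (Or.inl hx1)
                  · rw [Finset.mem_singleton] at hx1
                    subst hx1
                    exact absurd hq1 hx2
              rw [← dist_eq δ π π', ← dist_eq δ π' σ, ← dist_eq δ π σ] at hbet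
              exact hconv π hπS σ hσS π' hbet
            · -- q ∉ invF π, q ∈ invF τ ; use B
              have hqB : q ∈ ⋃ π ∈ S, (Tord δ \ Tord π) := hBτ (mem_invF'.mp hq1)
              obtain ⟨σ, hσS, hqσ⟩ := Set.mem_iUnion₂.mp hqB
              have hqσ' : q ∈ invF δ σ := mem_invF'.mpr hqσ
              have hbet : (symmDiff (invF δ π) (invF δ π')).card
                  + (symmDiff (invF δ π') (invF δ σ)).card
                  = (symmDiff (invF δ π) (invF δ σ)).card := by
                rw [card_between_iff]
                constructor
                · intro x hx
                  rw [Finset.mem_inter] at hx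
                  rw [hinv, Finset.mem_symmDiff]
                  left
                  refine ⟨hx.1, ?_⟩
                  rw [Finset.mem_singleton]
                  intro e; subst e
                  exact hq2 hx.1
                · intro x hx
                  rw [hinv, Finset.mem_symmDiff] at hx
                  rcases hx with ⟨hx1, -⟩ | ⟨hx1, hx2⟩
                  · exact Finset.mem_union.mpr (Or.inl hx1)
                  · rw [Finset.mem_singleton] at hx1
                    subst hx1
                    exact Finset.mem_union.mpr (Or.inr hqσ')
              rw [← dist_eq δ π π', ← dist_eq δ π' σ, ← dist_eq δ π σ] at hbet
              exact hconv π hπS σ hσS π' hbet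
          exact absurd (hmin π' hπ'S) (by omega)
end
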